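/- Let $A = \begin{pmatrix} a & b \\ \bar b & \bar a\end{pmatrix}$ be a (finite-dimensional) symplectic matrix, i.e., $\bar a^t a - b^t \bar b = 1$ and $\bar a^t b = b^t \bar a$, and let $Z$ be a symmetric matrix with $\bar Z Z < I$. Then $bZ + a$ is invertible, and $A\cdot Z := (\bar a Z + \bar b)(bZ+a)^{-1}$ is again symmetric with $\overline{A\cdot Z}(A\cdot Z) < I$; that is, the fractional-linear action of the symplectic group preserves the Siegel disc. -/

import Mathlib

/-!
Put `W = bZ + a` and `V = āZ + b̄`, so that `A·Z = V W⁻¹`. Expanding with the symplectic relations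
(and their transposes) gives `WᴴW - VᴴV = 1 - ZᴴZ` and, as `Z` is symmetric, `WᵀV = VᵀW`.
The first identity makes `WᴴW ≥ 1 - ZᴴZ` positive definite, so `W` is invertible, and conjugating
it by `W⁻¹` gives `1 - (VW⁻¹)ᴴ(VW⁻¹) = (W⁻¹)ᴴ(1 - ZᴴZ)W⁻¹ > 0`; the second says that `VW⁻¹` is
symmetric. For a symmetric matrix `X` one has `X̄ = Xᴴ`, so this is the Siegel disc condition.
-/

open Matrix
open scoped ComplexOrder

/-- The fractional-linear action of a symplectic block matrix
`A = [[a,b],[b̄,ā]]` on the Siegel disc: `A·Z = (āZ + b̄)(bZ + a)⁻¹`. -/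
noncomputable def siegelAction {n : ℕ} (a b Z : Matrix (Fin n) (Fin n) ℂ) :
    Matrix (Fin n) (Fin n) ℂ :=
  (a.map (starRingEnd ℂ) * Z + b.map (starRingEnd ℂ)) * (b * Z + a)⁻¹

namespace Matrix

variable {n : Type*}

lemma IsSymm.map_starRingEnd {R : Type*} [CommRing R] [StarRing R] {M : Matrix n n R}
    (hM : M.IsSymm) : M.map (starRingEnd R) = Mᴴ := by
  change Mᵀᴴ = Mᴴ
  rw [hM.eq]

variable [Fintype n] [DecidableEq n]

lemma isSymm_mul_inv_of_transpose_mul_comm {R : Type*} [CommRing R] {V W : Matrix n n R}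
    (hW : IsUnit W) (h : Wᵀ * V = Vᵀ * W) : (V * W⁻¹).IsSymm := by
  have hWT : IsUnit Wᵀ := (isUnit_transpose W).mpr hW
  calc (V * W⁻¹)ᵀ = (Wᵀ)⁻¹ * (Vᵀ * W) * W⁻¹ := by
        rw [transpose_mul, transpose_nonsing_inv, Matrix.mul_assoc, Matrix.mul_assoc,
          mul_nonsing_inv _ ((isUnit_iff_isUnit_det W).mp hW), Matrix.mul_one]
    _ = V * W⁻¹ := by
        rw [← h, ← Matrix.mul_assoc, nonsing_inv_mul _ ((isUnit_iff_isUnit_det _).mp hWT),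
          Matrix.one_mul]

lemma one_sub_conjTranspose_mul_self_mul_inv {R : Type*} [CommRing R] [StarRing R]
    {V W : Matrix n n R} (hW : IsUnit W) :
    1 - (V * W⁻¹)ᴴ * (V * W⁻¹) = (W⁻¹)ᴴ * (Wᴴ * W - Vᴴ * V) * W⁻¹ := by
  have hWW : W * W⁻¹ = 1 := mul_nonsing_inv _ ((isUnit_iff_isUnit_det W).mp hW)
  calc 1 - (V * W⁻¹)ᴴ * (V * W⁻¹) = (W * W⁻¹)ᴴ * (W * W⁻¹) - (V * W⁻¹)ᴴ * (V * W⁻¹) := by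
        rw [hWW, conjTranspose_one, Matrix.one_mul]
    _ = (W⁻¹)ᴴ * (Wᴴ * W - Vᴴ * V) * W⁻¹ := by
        simp only [conjTranspose_mul]
        noncomm_ring

section Field

variable {K : Type*} [Field K] [PartialOrder K] [StarRing K] [StarOrderedRing K]
  {V W : Matrix n n K}

lemma isUnit_of_posDef_conjTranspose_mul_self_sub (h : (Wᴴ * W - Vᴴ * V).PosDef) :
    IsUnit W := by
  have hWW : (Wᴴ * W).PosDef := by
    simpa using h.add_posSemidef (posSemidef_conjTranspose_mul_self V)
  exact isUnit_of_mul_isUnit_right hWW.isUnit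

lemma posDef_one_sub_conjTranspose_mul_self_mul_inv (h : (Wᴴ * W - Vᴴ * V).PosDef) :
    (1 - (V * W⁻¹)ᴴ * (V * W⁻¹)).PosDef := by
  have hW := isUnit_of_posDef_conjTranspose_mul_self_sub h
  rw [one_sub_conjTranspose_mul_self_mul_inv hW]
  exact h.conjTranspose_mul_mul_same (mulVec_injective_of_isUnit (isUnit_nonsing_inv_iff.mpr hW))

end Field

end Matrix

section Siegel

-- `Mᵀᴴ` is the entrywise conjugate `M̄`.
variable {R : Type*} [CommRing R] [StarRing R] {n : Type*} [Fintype n] {a b : Matrix n n R}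

def siegelNum (a b Z : Matrix n n R) : Matrix n n R := aᵀᴴ * Z + bᵀᴴ

def siegelDen (a b Z : Matrix n n R) : Matrix n n R := b * Z + a

lemma conjTranspose_mul_eq_transpose_mul_conj (h2 : aᴴ * b = bᵀ * aᵀᴴ) :
    bᴴ * a = aᵀ * bᵀᴴ := by
  simpa only [conjTranspose_mul, conjTranspose_conjTranspose] using congrArg conjTranspose h2

variable [DecidableEq n]

lemma transpose_mul_conj_sub_eq_one (h1 : aᴴ * a - bᵀ * bᵀᴴ = 1) :
    aᵀ * aᵀᴴ - bᴴ * b = 1 := by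
  simpa only [transpose_sub, transpose_mul, transpose_one, transpose_transpose,
    conjTranspose_transpose_eq_transpose_conjTranspose] using congrArg transpose h1

lemma siegelDen_conjTranspose_mul_self_sub (h1 : aᴴ * a - bᵀ * bᵀᴴ = 1)
    (h2 : aᴴ * b = bᵀ * aᵀᴴ) (Z : Matrix n n R) :
    (siegelDen a b Z)ᴴ * siegelDen a b Z - (siegelNum a b Z)ᴴ * siegelNum a b Z =
      1 - Zᴴ * Z := by
  have h1' := transpose_mul_conj_sub_eq_one h1
  have h2' := conjTranspose_mul_eq_transpose_mul_conj h2
  calc (siegelDen a b Z)ᴴ * siegelDen a b Z - (siegelNum a b Z)ᴴ * siegelNum a b Z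
      = -(Zᴴ * (aᵀ * aᵀᴴ - bᴴ * b) * Z) + Zᴴ * (bᴴ * a - aᵀ * bᵀᴴ)
          + (aᴴ * b - bᵀ * aᵀᴴ) * Z + (aᴴ * a - bᵀ * bᵀᴴ) := by
        simp only [siegelDen, siegelNum, conjTranspose_add, conjTranspose_mul,
          conjTranspose_conjTranspose]
        noncomm_ring
    _ = 1 - Zᴴ * Z := by
        rw [h1, h1', h2, h2', sub_self, sub_self]
        noncomm_ring

lemma siegelDen_transpose_mul_siegelNum (h1 : aᴴ * a - bᵀ * bᵀᴴ = 1)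
    (h2 : aᴴ * b = bᵀ * aᵀᴴ) {Z : Matrix n n R} (hZ : Z.IsSymm) :
    (siegelDen a b Z)ᵀ * siegelNum a b Z = (siegelNum a b Z)ᵀ * siegelDen a b Z := by
  have h1' := transpose_mul_conj_sub_eq_one h1
  have h2' := conjTranspose_mul_eq_transpose_mul_conj h2
  rw [← sub_eq_zero]
  calc (siegelDen a b Z)ᵀ * siegelNum a b Z - (siegelNum a b Z)ᵀ * siegelDen a b Z
      = Z * (bᵀ * aᵀᴴ - aᴴ * b) * Z - Z * (aᴴ * a - bᵀ * bᵀᴴ)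
          + (aᵀ * aᵀᴴ - bᴴ * b) * Z + (aᵀ * bᵀᴴ - bᴴ * a) := by
        simp only [siegelDen, siegelNum, transpose_add, transpose_mul, hZ.eq,
          ← conjTranspose_transpose_eq_transpose_conjTranspose, transpose_transpose]
        noncomm_ring
    _ = 0 := by
        rw [h1, h1', h2, h2', sub_self, sub_self]
        noncomm_ring

end Siegel

lemma siegelAction_eq {n : ℕ} (a b Z : Matrix (Fin n) (Fin n) ℂ) :
    siegelAction a b Z = siegelNum a b Z * (siegelDen a b Z)⁻¹ :=
  rfl

/-- Let `A = [[a,b],[b̄,ā]]` be symplectic (`āᵗa - bᵗb̄ = 1`, `āᵗb = bᵗā`) and let `Z`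
be symmetric with `Z̄Z < I`.  Then `bZ + a` is invertible and
`A·Z = (āZ + b̄)(bZ + a)⁻¹` is again symmetric with `(A·Z)‾(A·Z) < I`: the symplectic
group preserves the Siegel disc. -/
theorem stmt18 (n : ℕ) (a b Z : Matrix (Fin n) (Fin n) ℂ)
    (h1 : aᴴ * a - bᵀ * b.map (starRingEnd ℂ) = 1)
    (h2 : aᴴ * b = bᵀ * a.map (starRingEnd ℂ))
    (hZ : Zᵀ = Z) (hZD : (1 - Z.map (starRingEnd ℂ) * Z).PosDef) :
    IsUnit (b * Z + a) ∧
    (siegelAction a b Z)ᵀ = siegelAction a b Z ∧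
    (1 - (siegelAction a b Z).map (starRingEnd ℂ) * siegelAction a b Z).PosDef := by
  have hZsymm : Z.IsSymm := hZ
  rw [hZsymm.map_starRingEnd, ← siegelDen_conjTranspose_mul_self_sub h1 h2 Z] at hZD
  have hden : IsUnit (siegelDen a b Z) := isUnit_of_posDef_conjTranspose_mul_self_sub hZD
  have hsymm : (siegelAction a b Z).IsSymm :=
    isSymm_mul_inv_of_transpose_mul_comm hden (siegelDen_transpose_mul_siegelNum h1 h2 hZsymm)
  refine ⟨hden, hsymm, ?_⟩
  rw [hsymm.map_starRingEnd, siegelAction_eq]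
  exact posDef_one_sub_conjTranspose_mul_self_mul_inv hZD
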